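/- For every nonnegative integer n, f_n = δ(n+2,2), where f_n is the n-th Fibonacci number with the convention f_0 = f_1 = 1 and f_n = f_{n−1} + f_{n−2} for n ≥ 2. -/

import Mathlib

/-- The integer encoded (in binary, most significant digit first) by the `i`-th row
of the binary matrix `A`, i.e. `x_i = ∑_j a_{ij} 2^{m-j}` (1-indexed). -/
def rowVal {n m : ℕ} (A : Fin n → Fin m → Fin 2) (i : Fin n) : ℕ :=
  ∑ j : Fin m, (A i j : ℕ) * 2 ^ (m - 1 - (j : ℕ))

/-- The integer encoded by the `j`-th column of `A`, i.e. `y_j = ∑_i a_{ij} 2^{n-i}`. -/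
def colVal {n m : ℕ} (A : Fin n → Fin m → Fin 2) (j : Fin m) : ℕ :=
  ∑ i : Fin n, (A i j : ℕ) * 2 ^ (n - 1 - (i : ℕ))

/-- `A ∈ 𝔠_{n×m}`: rows and columns sorted in lexicographically nondecreasing order. -/
def memC {n m : ℕ} (A : Fin n → Fin m → Fin 2) : Prop :=
  Monotone (rowVal A) ∧ Monotone (colVal A)

/-- `A ∈ 𝔡_{n×m}`: rows and columns sorted in lexicographically nonincreasing order. -/
def memD {n m : ℕ} (A : Fin n → Fin m → Fin 2) : Prop :=
  Antitone (rowVal A) ∧ Antitone (colVal A)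

/-- `Λ_n^k`: n×n binary matrices with exactly `k` ones in each row and each column. -/
def lambdaSet (n k : ℕ) : Set (Fin n → Fin n → Fin 2) :=
  {A | (∀ i, ∑ j, (A i j : ℕ) = k) ∧ (∀ j, ∑ i, (A i j : ℕ) = k)}

/-- `Γ_n^k = 𝔠_{n×n} ∩ Λ_n^k`. -/
def GammaSet (n k : ℕ) : Set (Fin n → Fin n → Fin 2) :=
  {A | memC A} ∩ lambdaSet n k

/-- `Δ_n^k = 𝔡_{n×n} ∩ Λ_n^k`. -/
def DeltaSet (n k : ℕ) : Set (Fin n → Fin n → Fin 2) :=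
  {A | memD A} ∩ lambdaSet n k

/-- `γ(n,k) = |Γ_n^k|`. -/
noncomputable def gammaCard (n k : ℕ) : ℕ := (GammaSet n k).ncard

/-- `δ(n,k) = |Δ_n^k|`. -/
noncomputable def deltaCard (n k : ℕ) : ℕ := (DeltaSet n k).ncard

/-- The Fibonacci sequence with the convention `f_0 = f_1 = 1`. -/
def fibP : ℕ → ℕ
  | 0 => 1
  | 1 => 1
  | n + 2 => fibP (n + 1) + fibP n

/-!
Lex-decreasing columns force the first row of a matrix in `Δ_n^k` to be nonincreasing, hence equal
to `(1,…,1,0,…,0)`; by symmetry so is the first column. For `A ∈ Δ_{n+2}^2`, deleting the first row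
and column leaves a matrix `C` whose corner decides the case. If `C₀₀ = 1`, then `A` is the block sum
of the all-ones `2 × 2` block and a matrix of `Δ_n^2`. If `C₀₀ = 0`, setting it to `1` gives a matrix
of `Δ_{n+1}^2`: the only new comparison is that its first row `(1,1,0,…,0)` dominates every row with
two ones. Both constructions are reversible, so `δ(n+2,2) = δ(n+1,2) + δ(n,2)`, with `δ(0,2) = 1`
and `δ(1,2) = 0`.
-/

open Matrix (vecCons)
open Function (swap)

variable {m n k : ℕ}

def binVal (r : Fin m → Fin 2) : ℕ := ∑ j : Fin m, (r j : ℕ) * 2 ^ (m - 1 - (j : ℕ))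

lemma binVal_succ (r : Fin (m + 1) → Fin 2) :
    binVal r = r 0 * 2 ^ m + binVal (fun j => r j.succ) := by
  rw [binVal, Fin.sum_univ_succ, binVal]
  congr 1
  refine Finset.sum_congr rfl fun j _ => ?_
  rw [Fin.val_succ]
  congr 2
  omega

@[simp]
lemma binVal_cons (a : Fin 2) (r : Fin m → Fin 2) : binVal (vecCons a r) = a * 2 ^ m + binVal r :=
  binVal_succ _

@[simp]
lemma binVal_zero : binVal (0 : Fin m → Fin 2) = 0 := by
  simp [binVal]

lemma binVal_lt (r : Fin m → Fin 2) : binVal r < 2 ^ m := by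
  induction m with
  | zero => simp [binVal]
  | succ m ih =>
    have := ih fun j => r j.succ
    have : (r 0 : ℕ) ≤ 1 := Fin.is_le _
    rw [binVal_succ, pow_succ]
    nlinarith

def frontOnes (m k : ℕ) : Fin m → Fin 2 := fun j => if (j : ℕ) < k then 1 else 0

@[simp]
lemma frontOnes_zero : frontOnes m 0 = 0 := by
  ext j; simp [frontOnes]

lemma frontOnes_succ : frontOnes (m + 1) (k + 1) = vecCons 1 (frontOnes m k) := by
  ext j
  refine Fin.cases ?_ (fun j => ?_) j <;> simp [frontOnes]

lemma eq_frontOnes_of_antitone {r : Fin m → Fin 2} (hr : Antitone r)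
    (hsum : ∑ j, (r j : ℕ) = k) : r = frontOnes m k := by
  induction m generalizing k with
  | zero => subst hsum; ext j; exact j.elim0
  | succ m ih =>
    have htail : Antitone fun j : Fin m => r j.succ := hr.comp_monotone Fin.strictMono_succ.monotone
    rw [Fin.sum_univ_succ] at hsum
    obtain h0 | h0 : r 0 = 0 ∨ r 0 = 1 := by omega
    · have hzero (j) : r j = 0 := le_antisymm (h0 ▸ hr (Fin.zero_le j)) (Fin.zero_le _)
      obtain rfl : k = 0 := by simpa [hzero, eq_comm] using hsum
      rw [frontOnes_zero]
      exact funext hzero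
    · have hsum' : ∑ j : Fin m, (r j.succ : ℕ) + 1 = k := by simpa [h0, add_comm] using hsum
      subst hsum'
      rw [frontOnes_succ, ← ih htail rfl, ← h0]
      exact (Matrix.cons_head_tail r).symm

lemma binVal_le_binVal_frontOnes {r : Fin m → Fin 2} (hsum : ∑ j, (r j : ℕ) ≤ k) :
    binVal r ≤ binVal (frontOnes m k) := by
  induction m generalizing k with
  | zero => simp [binVal]
  | succ m ih =>
    rw [Fin.sum_univ_succ] at hsum
    rw [binVal_succ]
    obtain h0 | h0 : r 0 = 0 ∨ r 0 = 1 := by omega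
    · cases k with
      | zero => simpa [h0] using ih (k := 0) (r := fun j => r j.succ) (by simpa [h0] using hsum)
      | succ k =>
        have := binVal_lt fun j : Fin m => r j.succ
        rw [h0, frontOnes_succ, binVal_cons, Fin.val_zero, Fin.val_one]
        omega
    · have hsum' : ∑ j : Fin m, (r j.succ : ℕ) + 1 ≤ k := by simpa [h0, add_comm] using hsum
      obtain ⟨k, rfl⟩ : ∃ k', k = k' + 1 := ⟨k - 1, by omega⟩
      simpa [h0, frontOnes_succ] using ih (k := k) (r := fun j => r j.succ) (by omega)

lemma antitone_fin_succ_iff {α : Type*} [Preorder α] {f : Fin (n + 1) → α} :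
    Antitone f ↔ (∀ i : Fin n, f i.succ ≤ f 0) ∧ Antitone fun i : Fin n => f i.succ := by
  refine ⟨fun hf => ⟨fun i => hf (Fin.zero_le _),
    hf.comp_monotone Fin.strictMono_succ.monotone⟩, fun ⟨h0, hs⟩ i j hij => ?_⟩
  induction j using Fin.cases with
  | zero => rw [Fin.le_zero_iff.mp hij]
  | succ j =>
    induction i using Fin.cases with
    | zero => exact h0 j
    | succ i => exact hs (Fin.succ_le_succ_iff.mp hij)

lemma rowVal_eq_binVal (A : Fin n → Fin m → Fin 2) : rowVal A = fun i => binVal (A i) := rfl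

def RowsSorted (k : ℕ) (A : Fin n → Fin m → Fin 2) : Prop :=
  Antitone (rowVal A) ∧ ∀ i, ∑ j, (A i j : ℕ) = k

lemma mem_DeltaSet_iff {A : Fin n → Fin n → Fin 2} :
    A ∈ DeltaSet n k ↔ RowsSorted k A ∧ RowsSorted k (swap A) :=
  ⟨fun ⟨⟨hr, hc⟩, hrs, hcs⟩ => ⟨⟨hr, hrs⟩, ⟨hc, hcs⟩⟩,
    fun ⟨⟨hr, hrs⟩, ⟨hc, hcs⟩⟩ => ⟨⟨hr, hc⟩, hrs, hcs⟩⟩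

lemma swap_mem_DeltaSet {A : Fin n → Fin n → Fin 2} (hA : A ∈ DeltaSet n k) :
    swap A ∈ DeltaSet n k :=
  mem_DeltaSet_iff.mpr (mem_DeltaSet_iff.mp hA).symm

lemma rowsSorted_succ_iff {A : Fin (n + 1) → Fin m → Fin 2} :
    RowsSorted k A ↔
      ∑ j, (A 0 j : ℕ) = k ∧ (∀ i : Fin n, rowVal A i.succ ≤ rowVal A 0) ∧
        RowsSorted k fun i : Fin n => A i.succ := by
  simp only [RowsSorted, antitone_fin_succ_iff, Fin.forall_fin_succ (P := fun i => ∑ j, _ = k)]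
  tauto

@[simp]
lemma rowsSorted_cons_zero {A : Fin n → Fin m → Fin 2} :
    (RowsSorted k fun i => vecCons 0 (A i)) ↔ RowsSorted k A := by
  simp [RowsSorted, rowVal_eq_binVal, Fin.sum_univ_succ]

lemma antitone_apply_zero_of_antitone_rowVal {A : Fin n → Fin (m + 1) → Fin 2}
    (hA : Antitone (rowVal A)) :
    Antitone fun i => A i 0 := by
  intro i i' hii'
  have h := hA hii'
  simp only [rowVal_eq_binVal, binVal_succ (A _)] at h
  have := binVal_lt fun j : Fin m => A i j.succ
  have := binVal_lt fun j : Fin m => A i' j.succ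
  have := (A i 0).is_le
  rw [Fin.le_def]
  nlinarith

lemma row_zero_eq_frontOnes {A : Fin (n + 1) → Fin (n + 1) → Fin 2}
    (hA : A ∈ DeltaSet (n + 1) k) :
    A 0 = frontOnes (n + 1) k :=
  eq_frontOnes_of_antitone (antitone_apply_zero_of_antitone_rowVal (A := swap A) hA.1.2) (hA.2.1 0)

@[simp]
lemma sum_val_vecCons (a : Fin 2) (r : Fin m → Fin 2) :
    ∑ j, ((vecCons a r j : Fin 2) : ℕ) = a + ∑ j, (r j : ℕ) :=
  Fin.sum_univ_succ _

def border (a : Fin 2) (r c : Fin n → Fin 2) (C : Fin n → Fin n → Fin 2) :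
    Fin (n + 1) → Fin (n + 1) → Fin 2 :=
  vecCons (vecCons a r) fun i => vecCons (c i) (C i)

section border

variable {a a' : Fin 2} {r r' c c' : Fin n → Fin 2} {C C' : Fin n → Fin n → Fin 2}

@[simp] lemma border_zero : border a r c C 0 = vecCons a r := rfl

@[simp] lemma border_succ (i : Fin n) : border a r c C i.succ = vecCons (c i) (C i) := rfl

lemma swap_border : swap (border a r c C) = border a c r (swap C) := by
  ext i j
  induction i using Fin.cases <;> induction j using Fin.cases <;> rfl

lemma border_eta (A : Fin (n + 1) → Fin (n + 1) → Fin 2) :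
    border (A 0 0) (fun j => A 0 j.succ) (fun i => A i.succ 0) (fun i j => A i.succ j.succ) =
      A := by
  ext i j
  induction i using Fin.cases <;> induction j using Fin.cases <;> rfl

lemma border_inj :
    border a r c C = border a' r' c' C' ↔ a = a' ∧ r = r' ∧ c = c' ∧ C = C' := by
  refine ⟨fun h => ?_, by rintro ⟨rfl, rfl, rfl, rfl⟩; rfl⟩
  obtain ⟨h0, hsucc⟩ := Matrix.vecCons_inj.mp h
  obtain ⟨rfl, rfl⟩ := Matrix.vecCons_inj.mp h0
  have := fun i => Matrix.vecCons_inj.mp (congr_fun hsucc i)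
  exact ⟨rfl, rfl, funext fun i => (this i).1, funext fun i => (this i).2⟩

end border

lemma rowsSorted_border_cons_one_zero_iff {C : Fin (n + 1) → Fin (n + 1) → Fin 2} :
    RowsSorted 2 (border 1 (vecCons 1 0) (vecCons 1 0) C) ↔
      ∑ j, (C 0 j : ℕ) = 1 ∧ RowsSorted 2 fun i : Fin n => C i.succ := by
  have hrow0 (h : ∑ j, (C 0 j : ℕ) = 1) : binVal (C 0) ≤ 2 ^ n := by
    simpa [frontOnes_succ] using binVal_le_binVal_frontOnes h.le
  have hlt (i : Fin n) : binVal (C i.succ) < 2 ^ (n + 1) := binVal_lt _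
  simp only [rowsSorted_succ_iff, rowVal_eq_binVal, Fin.forall_fin_succ, border_zero, border_succ,
    sum_val_vecCons, binVal_cons, binVal_zero, Matrix.cons_val_zero, Matrix.cons_val_succ,
    Pi.zero_apply, rowsSorted_cons_zero, Fin.val_one, Fin.val_zero, Finset.sum_const_zero, one_mul,
    zero_mul, zero_add, add_zero, add_le_add_iff_left, true_and]
  constructor
  · rintro ⟨-, hsum, -, hrows⟩
    exact ⟨by omega, hrows⟩
  · rintro ⟨hsum, hrows⟩
    exact ⟨⟨hrow0 hsum, fun i => (hlt i).le.trans (by omega)⟩, by omega,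
      fun i => (hlt i).le.trans (by omega), hrows⟩

lemma antitone_apply_zero_of_rowsSorted {r : Fin n → Fin 2} {B : Fin n → Fin m → Fin 2}
    (h : RowsSorted k fun i => vecCons (r i) (B i)) : Antitone r := by
  simpa using antitone_apply_zero_of_antitone_rowVal h.1

lemma eq_border_of_mem_DeltaSet {A : Fin (n + 2) → Fin (n + 2) → Fin 2}
    (hA : A ∈ DeltaSet (n + 2) 2) :
    A = border 1 (vecCons 1 0) (vecCons 1 0) fun i j => A i.succ j.succ := by
  have hrow : A 0 = vecCons 1 (vecCons 1 0) := by
    rw [row_zero_eq_frontOnes hA, frontOnes_succ, frontOnes_succ, frontOnes_zero]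
  have hcol : swap A 0 = vecCons 1 (vecCons 1 0) := by
    rw [row_zero_eq_frontOnes (swap_mem_DeltaSet hA), frontOnes_succ, frontOnes_succ,
      frontOnes_zero]
  funext i j
  induction i using Fin.cases <;> induction j using Fin.cases
  · exact congr_fun hrow 0
  · exact congr_fun hrow _
  · exact congr_fun hcol _
  · rfl

lemma mem_DeltaSet_border_iff {C : Fin (n + 1) → Fin (n + 1) → Fin 2} :
    border 1 (vecCons 1 0) (vecCons 1 0) C ∈ DeltaSet (n + 2) 2 ↔
      (∑ j, (C 0 j : ℕ) = 1 ∧ RowsSorted 2 fun i : Fin n => C i.succ) ∧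
        ∑ j, (swap C 0 j : ℕ) = 1 ∧ RowsSorted 2 fun i : Fin n => swap C i.succ := by
  rw [mem_DeltaSet_iff, swap_border, rowsSorted_border_cons_one_zero_iff,
    rowsSorted_border_cons_one_zero_iff]

lemma rowsSorted_border_one_iff_of_antitone {r c : Fin n → Fin 2} {D : Fin n → Fin n → Fin 2}
    (hr : Antitone r) :
    RowsSorted 2 (border 1 r c D) ↔
      ∑ j, (r j : ℕ) = 1 ∧ RowsSorted 2 fun i => vecCons (c i) (D i) := by
  rw [rowsSorted_succ_iff]
  simp only [rowVal_eq_binVal, border_zero, border_succ, binVal_cons, sum_val_vecCons, Fin.val_one]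
  constructor
  · rintro ⟨hsum, -, hrows⟩
    exact ⟨by omega, hrows⟩
  · rintro ⟨hsum, hrows⟩
    refine ⟨by omega, fun i => ?_, hrows⟩
    -- `r = (1,0,…,0)`, so the first row `(1,1,0,…,0)` dominates every row with two ones.
    have := binVal_le_binVal_frontOnes (hrows.2 i).le
    rw [eq_frontOnes_of_antitone hr hsum]
    simpa [frontOnes_succ] using this

def prependOnesBlock (D : Fin n → Fin n → Fin 2) : Fin (n + 2) → Fin (n + 2) → Fin 2 :=
  border 1 (vecCons 1 0) (vecCons 1 0) (border 1 0 0 D)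

def splitCorner (M : Fin (n + 1) → Fin (n + 1) → Fin 2) :
    Fin (n + 2) → Fin (n + 2) → Fin 2 :=
  border 1 (vecCons 1 0) (vecCons 1 0)
    (border 0 (fun j => M 0 j.succ) (fun i => M i.succ 0) fun i j => M i.succ j.succ)

lemma prependOnesBlock_mem_DeltaSet_iff {D : Fin n → Fin n → Fin 2} :
    prependOnesBlock D ∈ DeltaSet (n + 2) 2 ↔ D ∈ DeltaSet n 2 := by
  rw [prependOnesBlock, mem_DeltaSet_border_iff, mem_DeltaSet_iff, swap_border]
  simp

lemma splitCorner_mem_DeltaSet_iff {M : Fin (n + 1) → Fin (n + 1) → Fin 2} (hM : M 0 0 = 1) :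
    splitCorner M ∈ DeltaSet (n + 2) 2 ↔ M ∈ DeltaSet (n + 1) 2 := by
  conv_rhs => rw [← border_eta M, hM]
  rw [splitCorner, mem_DeltaSet_border_iff, mem_DeltaSet_iff, swap_border, swap_border]
  simp only [border_zero, border_succ, sum_val_vecCons, Fin.val_zero, zero_add]
  constructor
  · rintro ⟨⟨hr, hrows⟩, hc, hcols⟩
    refine ⟨(rowsSorted_border_one_iff_of_antitone ?_).2 ⟨hr, hrows⟩,
      (rowsSorted_border_one_iff_of_antitone ?_).2 ⟨hc, hcols⟩⟩
    exacts [antitone_apply_zero_of_rowsSorted hcols, antitone_apply_zero_of_rowsSorted hrows]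
  · rintro ⟨hrows, hcols⟩
    have hr := antitone_apply_zero_of_rowsSorted (rowsSorted_succ_iff.mp hcols).2.2
    have hc := antitone_apply_zero_of_rowsSorted (rowsSorted_succ_iff.mp hrows).2.2
    exact ⟨(rowsSorted_border_one_iff_of_antitone hr).1 hrows,
      (rowsSorted_border_one_iff_of_antitone hc).1 hcols⟩

lemma apply_zero_zero_of_mem_DeltaSet {A : Fin (n + 1) → Fin (n + 1) → Fin 2}
    (hA : A ∈ DeltaSet (n + 1) (k + 1)) : A 0 0 = 1 := by
  simp [row_zero_eq_frontOnes hA, frontOnes]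

lemma eq_zero_of_sum_val_eq_zero {r : Fin n → Fin 2} (h : ∑ j, (r j : ℕ) = 0) : r = 0 :=
  funext fun j => Fin.ext (Finset.sum_eq_zero_iff.mp h j (Finset.mem_univ j))

lemma DeltaSet_add_two :
    DeltaSet (n + 2) 2 =
      prependOnesBlock '' DeltaSet n 2 ∪ splitCorner '' DeltaSet (n + 1) 2 := by
  ext A
  constructor
  · intro hA
    obtain ⟨C, rfl⟩ : ∃ C, A = border 1 (vecCons 1 0) (vecCons 1 0) C :=
      ⟨_, eq_border_of_mem_DeltaSet hA⟩
    obtain ⟨a, r, c, D, rfl⟩ : ∃ a r c D, C = border a r c D :=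
      ⟨_, _, _, _, (border_eta C).symm⟩
    obtain rfl | rfl : a = 0 ∨ a = 1 := by omega
    · exact Or.inr ⟨border 1 r c D, (splitCorner_mem_DeltaSet_iff rfl).mp hA, rfl⟩
    · have h := mem_DeltaSet_border_iff.mp hA
      rw [swap_border] at h
      simp only [border_zero, sum_val_vecCons, Fin.val_one, add_eq_left] at h
      obtain ⟨⟨hr, -⟩, hc, -⟩ := h
      rw [eq_zero_of_sum_val_eq_zero hr, eq_zero_of_sum_val_eq_zero hc] at hA ⊢
      exact Or.inl ⟨D, prependOnesBlock_mem_DeltaSet_iff.mp hA, rfl⟩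
  · rintro (⟨D, hD, rfl⟩ | ⟨M, hM, rfl⟩)
    · exact prependOnesBlock_mem_DeltaSet_iff.mpr hD
    · exact (splitCorner_mem_DeltaSet_iff (apply_zero_zero_of_mem_DeltaSet hM)).mpr hM

lemma prependOnesBlock_injective : (prependOnesBlock (n := n)).Injective := fun D D' h => by
  simpa [prependOnesBlock, border_inj] using h

lemma splitCorner_injOn : Set.InjOn splitCorner (DeltaSet (n + 1) 2) := by
  intro M hM M' hM' h
  obtain ⟨-, hr, hc, hD⟩ := border_inj.mp (border_inj.mp h).2.2.2
  rw [← border_eta M, ← border_eta M', apply_zero_zero_of_mem_DeltaSet hM,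
    apply_zero_zero_of_mem_DeltaSet hM', hr, hc, hD]

lemma deltaCard_add_two : deltaCard (n + 2) 2 = deltaCard (n + 1) 2 + deltaCard n 2 := by
  have hdisj : Disjoint (prependOnesBlock '' DeltaSet n 2) (splitCorner '' DeltaSet (n + 1) 2) := by
    rw [Set.disjoint_left]
    rintro _ ⟨D, -, rfl⟩ ⟨M, -, h⟩
    have h11 := congr_fun₂ h (Fin.succ 0) (Fin.succ 0)
    simp only [prependOnesBlock, splitCorner, border_succ, border_zero, Matrix.cons_val_zero,
      Matrix.cons_val_succ] at h11
    exact absurd h11 (by decide)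
  rw [deltaCard, DeltaSet_add_two, Set.ncard_union_eq hdisj,
    Set.ncard_image_of_injective _ prependOnesBlock_injective, splitCorner_injOn.ncard_image,
    add_comm]
  rfl

lemma deltaCard_zero : deltaCard 0 2 = 1 := by
  have : DeltaSet 0 2 = Set.univ := Set.eq_univ_of_forall fun _ =>
    ⟨⟨fun i => i.elim0, fun j => j.elim0⟩, fun i => i.elim0, fun j => j.elim0⟩
  simp [deltaCard, this]

lemma deltaCard_one : deltaCard 1 2 = 0 := by
  have : DeltaSet 1 2 = ∅ := Set.eq_empty_of_forall_notMem fun A hA => by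
    have := hA.2.1 0
    have := (A 0 0).is_le
    simp_all
  simp [deltaCard, this]

/-- Theorem: `f_n = δ(n+2,2)` for every `n ≥ 0`. -/
theorem fib_eq_delta (n : ℕ) : fibP n = deltaCard (n + 2) 2 := by
  induction n using fibP.induct with
  | case1 => rw [fibP, deltaCard_add_two, deltaCard_zero, deltaCard_one]
  | case2 => rw [fibP, deltaCard_add_two, deltaCard_add_two, deltaCard_zero, deltaCard_one]
  | case3 n ih₁ ih₂ => rw [fibP, deltaCard_add_two, ih₁, ih₂]
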